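/- arXiv:2102.08885 — 6 statements merged into one kernel-verified Lean document; each statement's English description precedes it below -/
import Mathlib

section
/- If two sign vectors σ, σ' ∈ {-1,+1}^n differ in at least d coordinates, then for any clustering C of the path's vertices, the sum of disagreements of C on P_n(σ) and on P_n(σ') is at least d; in particular, no clustering has fewer than d/2 disagreements on both paths simultaneously. -/
/-- Number of edges of the labeled path `P_n(σ)` disagreeing with the clustering `c`. -/
def pathErr {n : ℕ} (σ : Fin n → Bool) (c : Fin (n + 1) → ℕ) : ℕ :=
  (Finset.univ.filter fun i : Fin n =>
    (σ i = true ∧ c i.castSucc ≠ c i.succ) ∨ (σ i = false ∧ c i.castSucc = c i.succ)).card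

/-- An edge whose sign differs in `σ` and `σ'` disagrees with `c` on one of the two paths. -/
theorem card_sign_ne_le_pathErr_add {n : ℕ} (σ σ' : Fin n → Bool) (c : Fin (n + 1) → ℕ) :
    (Finset.univ.filter fun i : Fin n => σ i ≠ σ' i).card ≤ pathErr σ c + pathErr σ' c := by
  refine (Finset.card_le_card fun i hi => ?_).trans (Finset.card_union_le _ _)
  simp only [Finset.mem_filter, Finset.mem_univ, true_and, Finset.mem_union] at hi ⊢
  by_cases hc : c i.castSucc = c i.succ <;> cases hσ : σ i <;> cases hσ' : σ' i <;> simp_all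

/-- If the sign vectors `σ, σ'` differ in at least `d` coordinates, then for any
clustering `c` the total number of disagreements on `P_n(σ)` and `P_n(σ')` is at
least `d`; in particular `c` cannot have fewer than `d/2` disagreements on both
paths simultaneously. -/
theorem path_disagreements_of_far_sign_vectors (n d : ℕ) (σ σ' : Fin n → Bool)
    (hd : d ≤ (Finset.univ.filter fun i : Fin n => σ i ≠ σ' i).card)
    (c : Fin (n + 1) → ℕ) :
    d ≤ pathErr σ c + pathErr σ' c ∧
      ¬ ((pathErr σ c : ℝ) < d / 2 ∧ (pathErr σ' c : ℝ) < d / 2) := by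
  have hsum : d ≤ pathErr σ c + pathErr σ' c := hd.trans (card_sign_ne_le_pathErr_add σ σ' c)
  refine ⟨hsum, fun ⟨h, h'⟩ => ?_⟩
  have : (d : ℝ) ≤ pathErr σ c + pathErr σ' c := by exact_mod_cast hsum
  linarith
end

section
/- Any ε-differentially private algorithm for correlation clustering on unweighted labeled paths with ε ≤ 0.2 must have expected additive error Ω(n) in the MinDis objective: there exists a sign vector σ ∈ {-1,+1}^n such that the expected disagreement of the output clustering on P_n(σ) is at least βn/2 for β = 0.1 (while the optimum is 0). -/
open MeasureTheory
open scoped ENNReal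

/-!
By the Gilbert–Varshamov bound there is a set `C` of more than `11·e^{0.2n}` sign vectors
with pairwise Hamming distance at least `2k`, `k = ⌊n/16⌋`. An edge on which `σ` and `σ'`
disagree is a disagreement of every clustering with `P_n(σ)` or with `P_n(σ')`, so the events
`err(σ, ·) < k`, `σ ∈ C`, are pairwise disjoint. Group privacy compares each of them under
`M σ` with its probability under one common `M τ`, at the cost of a factor `e^{εn}`; hence for
some `σ ∈ C` the event has probability at most `e^{εn}/|C| ≤ 1/11`, and Markov's inequality
gives expected error at least `(10/11)·k ≥ 0.05·n`.
-/

open Finset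

theorem hammingDist_le_pathErr_add_pathErr {n : ℕ} (σ σ' : Fin n → Bool)
    (c : Fin (n + 1) → ℕ) : hammingDist σ σ' ≤ pathErr σ c + pathErr σ' c := by
  refine (card_le_card fun i hi => ?_).trans (card_union_le _ _)
  simp only [mem_filter, mem_univ, true_and, mem_union] at hi ⊢
  by_cases hc : c i.castSucc = c i.succ <;> cases h : σ i <;> cases h' : σ' i <;> simp_all

section GroupPrivacy

variable {ι β Ω : Type*} [Fintype ι] [DecidableEq ι] [DecidableEq β] [MeasurableSpace Ω]

theorem exists_hammingDist_eq_one_of_hammingDist_eq_succ {x y : ι → β} {k : ℕ}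
    (h : hammingDist x y = k + 1) : ∃ z, hammingDist x z = 1 ∧ hammingDist z y = k := by
  obtain ⟨i, hi⟩ : ∃ i, x i ≠ y i := by
    by_contra! hxy
    simp [funext hxy] at h
  refine ⟨Function.update x i (y i), ?_, ?_⟩
  · have hdiff : ({j | x j ≠ Function.update x i (y i) j} : Finset ι) = {i} := by
      ext j
      by_cases hj : j = i <;> simp [hj, hi]
    rw [hammingDist, hdiff, card_singleton]
  · have hdiff : ({j | Function.update x i (y i) j ≠ y j} : Finset ι) =
        ({j | x j ≠ y j} : Finset ι).erase i := by
      ext j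
      by_cases hj : j = i <;> simp [hj]
    rw [hammingDist, hdiff, card_erase_of_mem (by simpa using hi)]
    exact Nat.sub_eq_of_eq_add h

theorem measure_le_pow_hammingDist_mul {μ : (ι → β) → Measure Ω} {K : ℝ≥0∞}
    (hμ : ∀ x y, hammingDist x y = 1 → ∀ S, MeasurableSet S → μ x S ≤ K * μ y S)
    {S : Set Ω} (hS : MeasurableSet S) (x y : ι → β) :
    μ x S ≤ K ^ hammingDist x y * μ y S := by
  induction h : hammingDist x y generalizing x with
  | zero => simp [hammingDist_eq_zero.1 h]
  | succ k ih =>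
    obtain ⟨z, hxz, hzy⟩ := exists_hammingDist_eq_one_of_hammingDist_eq_succ h
    calc μ x S ≤ K * μ z S := hμ x z hxz S hS
      _ ≤ K * (K ^ k * μ y S) := by gcongr; exact ih z hzy
      _ = K ^ (k + 1) * μ y S := by ring

theorem measure_le_pow_card_mul {μ : (ι → β) → Measure Ω} {K : ℝ≥0∞} (hK : 1 ≤ K)
    (hμ : ∀ x y, hammingDist x y = 1 → ∀ S, MeasurableSet S → μ x S ≤ K * μ y S)
    {S : Set Ω} (hS : MeasurableSet S) (x y : ι → β) :
    μ x S ≤ K ^ Fintype.card ι * μ y S :=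
  (measure_le_pow_hammingDist_mul hμ hS x y).trans <| by
    gcongr
    exact hammingDist_le_card_fintype

end GroupPrivacy

section Packing

variable {α Ω : Type*} [MeasurableSpace Ω]

theorem exists_card_mul_measure_le_of_pairwiseDisjoint (μ : α → Measure Ω)
    [∀ a, IsProbabilityMeasure (μ a)] {C : Finset α} (hC : C.Nonempty) {S : α → Set Ω}
    (hS : ∀ a ∈ C, MeasurableSet (S a)) (hdisj : (C : Set α).PairwiseDisjoint S) {K : ℝ≥0∞}
    (hK : ∀ a ∈ C, ∀ b ∈ C, μ a (S a) ≤ K * μ b (S a)) :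
    ∃ a ∈ C, #C * μ a (S a) ≤ K := by
  obtain ⟨b, hb⟩ := hC
  obtain ⟨a, ha, hmin⟩ := C.exists_min_image (fun a => μ a (S a)) ⟨b, hb⟩
  refine ⟨a, ha, ?_⟩
  calc #C * μ a (S a) = ∑ _ ∈ C, μ a (S a) := by rw [sum_const, nsmul_eq_mul]
    _ ≤ ∑ c ∈ C, μ c (S c) := sum_le_sum hmin
    _ ≤ ∑ c ∈ C, K * μ b (S c) := sum_le_sum fun c hc => hK c hc b hb
    _ = K * μ b (⋃ c ∈ C, S c) := by rw [← mul_sum, measure_biUnion_finset hdisj hS]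
    _ ≤ K := mul_le_of_le_one_right' prob_le_one

theorem mul_one_sub_measure_lt_le_lintegral (μ : Measure Ω) [IsProbabilityMeasure μ]
    {f : Ω → ℝ≥0∞} (hf : Measurable f) (t : ℝ≥0∞) :
    t * (1 - μ {ω | f ω < t}) ≤ ∫⁻ ω, f ω ∂μ := by
  rw [← prob_compl_eq_one_sub (measurableSet_lt hf measurable_const)]
  simpa only [Set.compl_ofPred, not_lt] using mul_meas_ge_le_lintegral₀ hf.aemeasurable t

end Packing

section Code

variable {ι : Type*} [Fintype ι] [DecidableEq ι]

theorem exists_separated_covering (β : Type*) [Fintype β] [DecidableEq β] {d : ℕ}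
    (hd : 0 < d) :
    ∃ C : Finset (ι → β), (C : Set (ι → β)).Pairwise (fun x y => d ≤ hammingDist x y) ∧
      ∀ y, ∃ x ∈ C, hammingDist x y < d := by
  let P : Finset (Finset (ι → β)) :=
    {C | (C : Set (ι → β)).Pairwise fun x y => d ≤ hammingDist x y}
  obtain ⟨C, hCP, hmax⟩ := P.exists_max_image card ⟨∅, by simp [P]⟩
  have hsep := (mem_filter.1 hCP).2
  refine ⟨C, hsep, fun y => ?_⟩
  by_contra! hfar
  have hy : y ∉ C := fun hy => (hfar y hy).not_gt (by simpa using hd)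
  have hins : insert y C ∈ P := by
    simp only [P, mem_filter, mem_univ, true_and, coe_insert]
    refine (Set.pairwise_insert_of_notMem hy).2 ⟨hsep, fun x hx => ?_⟩
    exact ⟨hammingDist_comm x y ▸ hfar x hx, hfar x hx⟩
  have := hmax _ hins
  rw [card_insert_of_notMem hy] at this
  omega

theorem card_hammingDist_lt_le (x : ι → Bool) (d : ℕ) :
    #{y | hammingDist x y < d} ≤ ∑ i ∈ range d, (Fintype.card ι).choose i := by
  have hinj : Function.Injective fun y : ι → Bool => ({i | x i ≠ y i} : Finset ι) := by
    intro y z hyz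
    funext i
    have hi := congrArg (i ∈ ·) hyz
    simp only [mem_filter, mem_univ, true_and, eq_iff_iff] at hi
    revert hi
    cases x i <;> cases y i <;> cases z i <;> simp
  calc #{y | hammingDist x y < d}
      ≤ #((range d).biUnion fun i => powersetCard i (univ : Finset ι)) :=
        card_le_card_of_injOn _ (fun y hy => mem_biUnion.2 ⟨_, mem_range.2 (mem_filter.1 hy).2,
          mem_powersetCard.2 ⟨subset_univ _, rfl⟩⟩) hinj.injOn
    _ ≤ ∑ i ∈ range d, #(powersetCard i (univ : Finset ι)) := card_biUnion_le
    _ = ∑ i ∈ range d, (Fintype.card ι).choose i := by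
        simp only [card_powersetCard, card_univ]

theorem exists_separated_two_pow_le_card_mul {d : ℕ} (hd : 0 < d) :
    ∃ C : Finset (ι → Bool), (C : Set (ι → Bool)).Pairwise (fun x y => d ≤ hammingDist x y) ∧
      2 ^ Fintype.card ι ≤ #C * ∑ i ∈ range d, (Fintype.card ι).choose i := by
  obtain ⟨C, hsep, hcover⟩ := exists_separated_covering (ι := ι) Bool hd
  refine ⟨C, hsep, ?_⟩
  calc 2 ^ Fintype.card ι = #(univ : Finset (ι → Bool)) := by simp
    _ ≤ #(C.biUnion fun x => {y | hammingDist x y < d}) :=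
        card_le_card fun y _ => by simpa using hcover y
    _ ≤ _ := card_biUnion_le_card_mul _ _ _ fun x _ => card_hammingDist_lt_le x d

end Code

theorem sum_range_choose_le_div_pow {x : ℝ} (hx₀ : 0 < x) (hx₁ : x ≤ 1) (n d : ℕ) :
    (∑ i ∈ range d, n.choose i : ℝ) ≤ (1 + x) ^ n / x ^ d := by
  have hterm : ∀ i ∈ range d, (n.choose i : ℝ) ≤ x ^ i * n.choose i / x ^ d := by
    intro i hi
    have hpow : x ^ d ≤ x ^ i := pow_le_pow_of_le_one hx₀.le hx₁ (mem_range.1 hi).le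
    rw [le_div_iff₀ (by positivity)]
    simpa only [mul_comm] using mul_le_mul_of_nonneg_left hpow (Nat.cast_nonneg (n.choose i))
  have hzero : ∀ i ∈ range (max d (n + 1)), i ∉ range (n + 1) → x ^ i * n.choose i = 0 := by
    intro i _ hi
    simp [Nat.choose_eq_zero_of_lt (by simpa using hi)]
  calc (∑ i ∈ range d, n.choose i : ℝ)
      ≤ ∑ i ∈ range d, x ^ i * n.choose i / x ^ d := sum_le_sum hterm
    _ ≤ ∑ i ∈ range (max d (n + 1)), x ^ i * n.choose i / x ^ d :=
        sum_le_sum_of_subset_of_nonneg (range_subset_range.2 (le_max_left _ _))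
          fun _ _ _ => by positivity
    _ = (∑ i ∈ range (n + 1), x ^ i * n.choose i) / x ^ d := by
        rw [← sum_div, ← sum_subset (range_subset_range.2 (le_max_right _ _)) hzero]
    _ = (1 + x) ^ n / x ^ d := by
        rw [add_comm 1 x, add_pow]
        simp only [one_pow, mul_one]

theorem exp_two_tenths_le : Real.exp 0.2 ≤ 1.2215 := by
  refine le_of_pow_le_pow_left₀ (n := 5) (by norm_num) (by norm_num) ?_
  rw [← Real.exp_nat_mul]
  norm_num
  exact Real.exp_one_lt_d9.le.trans (by norm_num)

theorem eleven_mul_exp_mul_le_two_pow {n : ℕ} (hn : 26 ≤ n) :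
    11 * Real.exp (0.2 * n) * (49 ^ (n / 16) * (8 / 7) ^ n) ≤ 2 ^ n := by
  have h11 : (11 : ℝ) ≤ 1.1 ^ n :=
    (by norm_num : (11 : ℝ) ≤ 1.1 ^ 26).trans (pow_le_pow_right₀ (by norm_num) hn)
  have hexp : Real.exp (0.2 * n) ≤ 1.2215 ^ n := by
    rw [mul_comm, Real.exp_nat_mul]
    exact pow_le_pow_left₀ (Real.exp_nonneg _) exp_two_tenths_le n
  have h49 : (49 : ℝ) ^ (n / 16) ≤ 1.28 ^ n :=
    calc (49 : ℝ) ^ (n / 16) ≤ (1.28 ^ 16) ^ (n / 16) := by gcongr; norm_num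
      _ ≤ 1.28 ^ n := by
        rw [← pow_mul]
        exact pow_le_pow_right₀ (by norm_num) (Nat.mul_div_le n 16)
  calc 11 * Real.exp (0.2 * n) * (49 ^ (n / 16) * (8 / 7) ^ n)
      ≤ 1.1 ^ n * 1.2215 ^ n * (1.28 ^ n * (8 / 7) ^ n) := by gcongr
    _ = (1.1 * 1.2215 * 1.28 * (8 / 7)) ^ n := by simp only [mul_pow]; ring
    _ ≤ 2 ^ n := by gcongr; norm_num

theorem eleven_mul_exp_le_of_two_pow_le {n c : ℕ} (hn : 26 ≤ n)
    (h : 2 ^ n ≤ c * ∑ i ∈ range (2 * (n / 16)), n.choose i) :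
    11 * Real.exp (0.2 * n) ≤ c := by
  have hball : (∑ i ∈ range (2 * (n / 16)), n.choose i : ℝ) ≤ 49 ^ (n / 16) * (8 / 7) ^ n :=
    (sum_range_choose_le_div_pow (x := 1 / 7) (by norm_num) (by norm_num) n _).trans_eq
      (by rw [pow_mul, div_eq_mul_inv, ← inv_pow]; norm_num; ring)
  refine le_of_mul_le_mul_right ?_ (by positivity : (0 : ℝ) < 49 ^ (n / 16) * (8 / 7) ^ n)
  calc 11 * Real.exp (0.2 * n) * (49 ^ (n / 16) * (8 / 7) ^ n) ≤ 2 ^ n :=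
        eleven_mul_exp_mul_le_two_pow hn
    _ ≤ c * ∑ i ∈ range (2 * (n / 16)), (n.choose i : ℝ) := by exact_mod_cast h
    _ ≤ c * (49 ^ (n / 16) * (8 / 7) ^ n) := by gcongr

theorem le_inv_eleven_of_card_mul_le {n c : ℕ} {ε : ℝ} {q : ℝ≥0∞} (hε : ε ≤ 0.2)
    (hc : 11 * Real.exp (0.2 * n) ≤ c) (hq : c * q ≤ ENNReal.ofReal (Real.exp ε) ^ n) :
    q ≤ 11⁻¹ := by
  have hc₀ : c ≠ 0 := by
    rintro rfl
    linarith [Real.exp_pos (0.2 * n)]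
  refine (ENNReal.mul_le_mul_iff_right (by exact_mod_cast hc₀) (ENNReal.natCast_ne_top c)).1
    (hq.trans ?_)
  calc ENNReal.ofReal (Real.exp ε) ^ n = ENNReal.ofReal (Real.exp (n * ε)) := by
        rw [← ENNReal.ofReal_pow (Real.exp_nonneg _), ← Real.exp_nat_mul]
    _ ≤ ENNReal.ofReal (c / 11) := by
        refine ENNReal.ofReal_le_ofReal ?_
        have := Real.exp_le_exp.2 (mul_le_mul_of_nonneg_left hε (Nat.cast_nonneg n))
        rw [mul_comm (n : ℝ) 0.2] at this
        linarith
    _ = c * 11⁻¹ := by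
        rw [ENNReal.ofReal_div_of_pos (by norm_num)]
        simp [div_eq_mul_inv]

theorem ofReal_le_div_sixteen_mul_one_sub_inv_eleven {n : ℕ} (hn : 125 ≤ n) :
    ENNReal.ofReal (0.05 * n) ≤ (n / 16 : ℕ) * (1 - 11⁻¹) := by
  have hk : (n : ℝ) ≤ 16 * (n / 16 : ℕ) + 15 := by
    exact_mod_cast (by omega : n ≤ 16 * (n / 16) + 15)
  have hn' : (125 : ℝ) ≤ n := by exact_mod_cast hn
  rw [ENNReal.ofReal_le_iff_le_toReal (ENNReal.mul_ne_top (ENNReal.natCast_ne_top _)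
      (ENNReal.sub_ne_top ENNReal.one_ne_top)), ENNReal.toReal_mul,
    ENNReal.toReal_sub_of_le (by norm_num) ENNReal.one_ne_top]
  norm_num
  linarith

theorem pairwiseDisjoint_pathErr_lt {n k : ℕ} {C : Set (Fin n → Bool)}
    (hC : C.Pairwise fun σ σ' => 2 * k ≤ hammingDist σ σ') :
    C.PairwiseDisjoint fun σ => {c | pathErr σ c < k} := by
  intro σ hσ σ' hσ' hne
  refine Set.disjoint_left.2 fun c hc hc' => ?_
  have hsep := hC hσ hσ' hne
  have htri := hammingDist_le_pathErr_add_pathErr σ σ' c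
  simp only [Set.mem_ofPred_eq] at hc hc'
  omega

/-- Lower bound for private correlation clustering on unweighted paths:
for all sufficiently large `n`, any `ε`-differentially private algorithm `M`
(with `0 < ε ≤ 0.2`, where neighboring inputs are sign vectors differing in one
coordinate) mapping a sign vector `σ ∈ {±1}^n` to a distribution over clusterings
of the path `P_n(σ)` must, on some input `σ`, have expected disagreement at least
`βn/2 = 0.05·n` (while the optimum is `0`). -/
theorem dp_path_clustering_lower_bound :
    ∃ N : ℕ, ∀ n ≥ N, ∀ ε : ℝ, 0 < ε → ε ≤ 0.2 →
      ∀ M : (Fin n → Bool) → Measure (Fin (n + 1) → ℕ),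
        (∀ σ, IsProbabilityMeasure (M σ)) →
        (∀ σ σ' : Fin n → Bool,
          (Finset.univ.filter fun i : Fin n => σ i ≠ σ' i).card = 1 →
          ∀ S : Set (Fin (n + 1) → ℕ), MeasurableSet S →
            M σ S ≤ ENNReal.ofReal (Real.exp ε) * M σ' S) →
        ∃ σ : Fin n → Bool,
          ENNReal.ofReal (0.05 * n) ≤ ∫⁻ c, (pathErr σ c : ℝ≥0∞) ∂(M σ) := by
  refine ⟨125, fun n hn ε hε₀ hε M hM hDP => ?_⟩
  set k := n / 16
  obtain ⟨C, hsep, hcard⟩ :=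
    exists_separated_two_pow_le_card_mul (ι := Fin n) (d := 2 * k) (by omega)
  rw [Fintype.card_fin] at hcard
  have hC := eleven_mul_exp_le_of_two_pow_le (by omega) hcard
  have hCne : C.Nonempty :=
    card_pos.1 (by exact_mod_cast (by positivity : (0 : ℝ) < 11 * Real.exp (0.2 * n)).trans_le hC)
  have hK : ∀ σ ∈ C, ∀ τ ∈ C, M σ {c | pathErr σ c < k} ≤
      ENNReal.ofReal (Real.exp ε) ^ n * M τ {c | pathErr σ c < k} := fun σ _ τ _ => by
    -- `hDP` is the hypothesis of `measure_le_pow_card_mul` with `hammingDist` unfolded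
    simpa using measure_le_pow_card_mul (ENNReal.one_le_ofReal.2 (Real.one_le_exp hε₀.le)) hDP
      (Set.to_countable _).measurableSet σ τ
  obtain ⟨σ, -, hσ⟩ := exists_card_mul_measure_le_of_pairwiseDisjoint M hCne
    (fun σ _ => (Set.to_countable _).measurableSet) (pairwiseDisjoint_pathErr_lt hsep) hK
  refine ⟨σ, ?_⟩
  calc ENNReal.ofReal (0.05 * n) ≤ k * (1 - 11⁻¹) :=
        ofReal_le_div_sixteen_mul_one_sub_inv_eleven hn
    _ ≤ k * (1 - M σ {c | pathErr σ c < k}) := by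
        gcongr
        exact le_inv_eleven_of_card_mul_le hε hC hσ
    _ ≤ ∫⁻ c, (pathErr σ c : ℝ≥0∞) ∂(M σ) := by
      simpa only [Nat.cast_lt] using
        mul_one_sub_measure_lt_le_lintegral (M σ)
          (measurable_of_countable fun c => (pathErr σ c : ℝ≥0∞)) k
end

section
/- Let G and H be labeled graphs on the same vertex set V such that for all S, T ⊆ V, |w_G⁺(S,T) - w_H⁺(S,T)| ≤ η and |w_G⁻(S,T) - w_H⁻(S,T)| ≤ η. Then for any clustering C with k clusters, |err(C, G) - err(C, H)| ≤ 2kη and |agr(C, G) - agr(C, H)| ≤ 2kη. -/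
/-- Cut weight between vertex sets `S` and `T` (over ordered pairs). -/
def cutW {V : Type*} [Fintype V] (w : V → V → ℝ) (S T : Finset V) : ℝ :=
  ∑ u ∈ S, ∑ v ∈ T, w u v

/-- Disagreement of the clustering `c` with the labeled graph given by positive
weights `wpos` and negative weights `wneg`: total weight of positive edges crossing
clusters plus negative edges within clusters. -/
def errW {V : Type*} [Fintype V] {k : ℕ} (wpos wneg : V → V → ℝ) (c : V → Fin k) : ℝ :=
  ∑ u, ∑ v, if c u = c v then wneg u v else wpos u v

/-- Agreement of the clustering `c` with the labeled graph: total weight of positive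
edges within clusters plus negative edges crossing clusters. -/
def agrW {V : Type*} [Fintype V] {k : ℕ} (wpos wneg : V → V → ℝ) (c : V → Fin k) : ℝ :=
  ∑ u, ∑ v, if c u = c v then wpos u v else wneg u v

/-
Grouping the ordered pairs `(u, v)` by the cluster `i` of `u`, the disagreement is a sum over the
`k` clusters of one negative cut weight (cluster `i` to itself) and one positive cut weight
(cluster `i` to its complement). Each of these `2k` cut weights moves by at most `η` from `G` to `H`.
Agreement is disagreement with the roles of the positive and negative weights exchanged.
-/

section

variable {V : Type*} [Fintype V] {k : ℕ}

lemma errW_eq_sum_cutW (wpos wneg : V → V → ℝ) (c : V → Fin k) :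
    errW wpos wneg c = ∑ i, (cutW wneg {v | c v = i} {v | c v = i} +
      cutW wpos {v | c v = i} {v | c v ≠ i}) := by
  unfold errW cutW
  rw [← Finset.sum_fiberwise Finset.univ c]
  refine Finset.sum_congr rfl fun i _ => ?_
  rw [← Finset.sum_add_distrib]
  refine Finset.sum_congr rfl fun u hu => ?_
  rw [(Finset.mem_filter.mp hu).2, ← Finset.sum_ite]
  simp only [eq_comm]

lemma agrW_eq_errW_swap (wpos wneg : V → V → ℝ) (c : V → Fin k) :
    agrW wpos wneg c = errW wneg wpos c :=
  rfl

lemma abs_errW_sub_errW_le (wGp wGn wHp wHn : V → V → ℝ) {η : ℝ}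
    (hp : ∀ S T : Finset V, |cutW wGp S T - cutW wHp S T| ≤ η)
    (hn : ∀ S T : Finset V, |cutW wGn S T - cutW wHn S T| ≤ η) (c : V → Fin k) :
    |errW wGp wGn c - errW wHp wHn c| ≤ 2 * k * η := by
  have cluster_le : ∀ S T : Finset V,
      |(cutW wGn S S + cutW wGp S T) - (cutW wHn S S + cutW wHp S T)| ≤ 2 * η := fun S T =>
    calc _ = |(cutW wGn S S - cutW wHn S S) + (cutW wGp S T - cutW wHp S T)| := by ring_nf
      _ ≤ |cutW wGn S S - cutW wHn S S| + |cutW wGp S T - cutW wHp S T| := abs_add_le _ _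
      _ ≤ 2 * η := by linarith [hn S S, hp S T]
  rw [errW_eq_sum_cutW, errW_eq_sum_cutW, ← Finset.sum_sub_distrib]
  calc _ ≤ ∑ _i : Fin k, 2 * η :=
        (Finset.abs_sum_le_sum_abs _ _).trans (Finset.sum_le_sum fun i _ => cluster_le _ _)
    _ = 2 * k * η := by
        rw [Finset.sum_const, Finset.card_univ, Fintype.card_fin, nsmul_eq_mul]
        ring

end

/-- If the positive and negative cut weights of `G` and `H` agree up to `η` on every
pair of vertex sets, then for any clustering with `k` clusters the disagreements and
agreements on `G` and `H` differ by at most `2kη`. -/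
theorem err_agr_transfer {V : Type*} [Fintype V] (k : ℕ)
    (wGp wGn wHp wHn : V → V → ℝ) (η : ℝ)
    (hp : ∀ S T : Finset V, |cutW wGp S T - cutW wHp S T| ≤ η)
    (hn : ∀ S T : Finset V, |cutW wGn S T - cutW wHn S T| ≤ η)
    (c : V → Fin k) :
    |errW wGp wGn c - errW wHp wHn c| ≤ 2 * k * η ∧
      |agrW wGp wGn c - agrW wHp wHn c| ≤ 2 * k * η := by
  refine ⟨abs_errW_sub_errW_le wGp wGn wHp wHn hp hn c, ?_⟩
  rw [agrW_eq_errW_swap, agrW_eq_errW_swap]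
  exact abs_errW_sub_errW_le wGn wGp wHn wHp hn hp c
end

section
/- For every n-vertex unweighted complete labeled graph G and every k' ≥ 1, there exists a clustering C' with at most 2k' clusters such that err(C', G) ≤ OPT + 4n²/k', where OPT is the minimum disagreement over all clusterings (with arbitrarily many clusters). -/
/-!
Start from an optimal clustering `q` and let `t = ⌊n / k⌋`. Clusters of `q` with more than `t`
points are kept; there are fewer than `k` of them. The points of the remaining small clusters are
repacked into at most `k` bins of `t + 1 ≤ 2t` points each. Only pairs of points of small
clusters change status, and each such point loses at most `t` partners and gains at most `2t`,
so the error grows by at most `3tn ≤ 3n²/k`.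
-/

/-- Disagreement of a clustering `c` of the unweighted complete labeled graph on
`Fin n` whose edge `{u,v}` (for `u < v`) is labeled positive when `pos u v = true`. -/
def errU {n : ℕ} (pos : Fin n → Fin n → Bool) (c : Fin n → ℕ) : ℕ :=
  (Finset.univ.filter fun p : Fin n × Fin n =>
    p.1 < p.2 ∧ ((pos p.1 p.2 = true ∧ c p.1 ≠ c p.2) ∨
                 (pos p.1 p.2 = false ∧ c p.1 = c p.2))).card

open Finset

lemma Finset.exists_injOn_lt_card {α : Type*} (S : Finset α) :
    ∃ r : α → ℕ, Set.InjOn r S ∧ ∀ v ∈ S, r v < #S := by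
  classical
  refine ⟨fun v => if h : v ∈ S then S.equivFin ⟨v, h⟩ else 0, fun u hu v hv huv => ?_,
    fun v hv => by simp [hv]⟩
  simp only [mem_coe] at hu hv
  simp only [dif_pos hu, dif_pos hv] at huv
  exact congrArg Subtype.val (S.equivFin.injective (Fin.ext huv))

lemma Finset.exists_bins {α : Type*} (S : Finset α) {k s : ℕ} (hs : 0 < s) (hS : #S ≤ k * s) :
    ∃ b : α → ℕ, (∀ v ∈ S, b v < k) ∧ ∀ i, #{v ∈ S | b v = i} ≤ s := by
  obtain ⟨r, hr_inj, hr_lt⟩ := S.exists_injOn_lt_card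
  refine ⟨fun v => r v / s, fun v hv => (Nat.div_lt_iff_lt_mul hs).2 ((hr_lt v hv).trans_le hS),
    fun i => ?_⟩
  calc #{v ∈ S | r v / s = i} ≤ #(Ico (i * s) (i * s + s)) := by
        refine card_le_card_of_injOn r (fun v hv => ?_)
          (hr_inj.mono (coe_subset.2 (filter_subset _ _)))
        have := (Nat.div_eq_iff hs).1 (mem_filter.1 hv).2
        simp only [coe_Ico, Set.mem_Ico]
        omega
    _ = s := by simp

lemma Finset.card_filter_product_eq_le_mul {α β : Type*} [DecidableEq β] (S : Finset α)
    (g : α → β) {m : ℕ} (h : ∀ v ∈ S, #{u ∈ S | g u = g v} ≤ m) :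
    #{p ∈ S ×ˢ S | g p.1 = g p.2} ≤ m * #S := by
  calc #{p ∈ S ×ˢ S | g p.1 = g p.2} = ∑ v ∈ S, #{u ∈ S | g u = g v} := by
        simp only [card_filter, sum_product, eq_comm]
    _ ≤ ∑ _v ∈ S, m := sum_le_sum h
    _ = m * #S := by rw [sum_const, smul_eq_mul, mul_comm]

section Coarsening

variable {α β γ : Type*} [Fintype α] [DecidableEq β] [DecidableEq γ]

def coclusteringDiff (c₁ : α → β) (c₂ : α → γ) : Finset (α × α) :=
  {p | ¬(c₁ p.1 = c₁ p.2 ↔ c₂ p.1 = c₂ p.2)}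

def smallPart (q : α → β) (t : ℕ) : Finset α :=
  {v | #{u | q u = q v} ≤ t}

def coarsening (q : α → β) (t : ℕ) (b : α → ℕ) (v : α) : β ⊕ ℕ :=
  if #{u | q u = q v} ≤ t then .inr (b v) else .inl (q v)

variable {q : α → β} {t : ℕ} {b : α → ℕ} {u v : α}

lemma mem_smallPart : v ∈ smallPart q t ↔ #{u | q u = q v} ≤ t := by
  simp [smallPart]

lemma mem_smallPart_congr (h : q u = q v) :
    u ∈ smallPart q t ↔ v ∈ smallPart q t := by
  simp only [mem_smallPart, h]

lemma one_le_of_mem_smallPart (hv : v ∈ smallPart q t) : 1 ≤ t :=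
  (card_pos.2 ⟨v, by simp⟩).trans_le (mem_smallPart.1 hv)

lemma card_filter_eq_le_of_mem_smallPart (S : Finset α) (hv : v ∈ smallPart q t) :
    #{u ∈ S | q u = q v} ≤ t :=
  (card_le_card (filter_subset_filter _ (subset_univ S))).trans (mem_smallPart.1 hv)

lemma mul_card_image_compl_smallPart_le [DecidableEq α] :
    (t + 1) * #((smallPart q t)ᶜ.image q) ≤ Fintype.card α := by
  refine (mul_card_image_le_card _ _ fun y hy => ?_).trans (card_le_univ _)
  obtain ⟨v, hv, rfl⟩ := mem_image.1 hy
  have hfib : ({u | q u = q v} : Finset α) ⊆ {u ∈ (smallPart q t)ᶜ | q u = q v} :=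
    fun u hu => by
      have hu : q u = q v := (mem_filter.1 hu).2
      simpa [hu] using (mem_smallPart_congr hu).not.2 (mem_compl.1 hv)
  exact (not_le.1 (mt mem_smallPart.2 (mem_compl.1 hv))).trans_le (card_le_card hfib)

lemma coarsening_of_mem (hv : v ∈ smallPart q t) : coarsening q t b v = .inr (b v) :=
  if_pos (mem_smallPart.1 hv)

lemma coarsening_of_not_mem (hv : v ∉ smallPart q t) : coarsening q t b v = .inl (q v) :=
  if_neg (mt mem_smallPart.2 hv)

lemma card_image_coarsening_le [DecidableEq α] {k : ℕ} (hb : ∀ v ∈ smallPart q t, b v < k) :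
    #(univ.image (coarsening q t b)) ≤ #((smallPart q t)ᶜ.image q) + k := by
  calc _ ≤ #(((smallPart q t)ᶜ.image q).disjSum (range k)) := card_le_card fun x hx => ?_
    _ = _ := by rw [card_disjSum, card_range]
  obtain ⟨v, -, rfl⟩ := mem_image.1 hx
  by_cases hv : v ∈ smallPart q t
  · simp [coarsening_of_mem hv, hb v hv]
  · simpa [coarsening_of_not_mem hv] using ⟨v, hv, rfl⟩

lemma coclusteringDiff_coarsening_subset [DecidableEq α] :
    coclusteringDiff (coarsening q t b) q ⊆
      {p ∈ smallPart q t ×ˢ smallPart q t | q p.1 = q p.2} ∪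
        {p ∈ smallPart q t ×ˢ smallPart q t | b p.1 = b p.2} := by
  rintro ⟨u, v⟩ h
  simp only [coclusteringDiff, mem_filter, mem_univ, true_and] at h
  by_cases hu : u ∈ smallPart q t <;> by_cases hv : v ∈ smallPart q t
  · simp only [coarsening_of_mem hu, coarsening_of_mem hv, Sum.inr.injEq] at h
    simp only [mem_union, mem_filter, mem_product, hu, hv, true_and]
    tauto
  · simp only [coarsening_of_mem hu, coarsening_of_not_mem hv, reduceCtorEq, false_iff,
      not_not] at h
    exact absurd ((mem_smallPart_congr h).1 hu) hv
  · simp only [coarsening_of_not_mem hu, coarsening_of_mem hv, reduceCtorEq, false_iff,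
      not_not] at h
    exact absurd ((mem_smallPart_congr h).2 hv) hu
  · simp [coarsening_of_not_mem hu, coarsening_of_not_mem hv] at h

lemma card_coclusteringDiff_coarsening_le [DecidableEq α]
    (hb : ∀ i, #{v ∈ smallPart q t | b v = i} ≤ t + 1) :
    #(coclusteringDiff (coarsening q t b) q) ≤ 3 * t * Fintype.card α := by
  set S := smallPart q t
  have hq_pairs : #{p ∈ S ×ˢ S | q p.1 = q p.2} ≤ t * #S :=
    S.card_filter_product_eq_le_mul q fun _ hv => card_filter_eq_le_of_mem_smallPart S hv
  have hb_pairs : #{p ∈ S ×ˢ S | b p.1 = b p.2} ≤ (t + 1) * #S :=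
    S.card_filter_product_eq_le_mul b fun v _ => hb (b v)
  have hS : #S ≤ t * #S := by
    rcases S.eq_empty_or_nonempty with hS | ⟨v, hv⟩
    · simp [hS]
    · exact Nat.le_mul_of_pos_left _ (one_le_of_mem_smallPart hv)
  calc _ ≤ _ := card_le_card coclusteringDiff_coarsening_subset
    _ ≤ _ := card_union_le _ _
    _ ≤ 3 * t * #S := by nlinarith
    _ ≤ 3 * t * Fintype.card α := Nat.mul_le_mul_left _ (card_le_univ S)

theorem exists_coarsening (q : α → β) {k : ℕ} (hk : 0 < k) :
    ∃ d : α → β ⊕ ℕ, #(univ.image d) ≤ 2 * k ∧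
      #(coclusteringDiff d q) ≤ 3 * (Fintype.card α / k) * Fintype.card α := by
  classical
  set t := Fintype.card α / k
  have hn : Fintype.card α < k * (t + 1) := Nat.lt_mul_div_succ _ hk
  obtain ⟨b, hb_lt, hb_card⟩ :=
    (smallPart q t).exists_bins t.succ_pos ((card_le_univ _).trans hn.le)
  refine ⟨coarsening q t b, ?_, card_coclusteringDiff_coarsening_le hb_card⟩
  have hlarge : #((smallPart q t)ᶜ.image q) < k := by
    refine Nat.lt_of_mul_lt_mul_left (a := t + 1) ?_
    rw [mul_comm _ k]
    exact mul_card_image_compl_smallPart_le.trans_lt hn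
  calc _ ≤ _ := card_image_coarsening_le hb_lt
    _ ≤ 2 * k := by omega

end Coarsening

lemma errU_le_errU_add_card_coclusteringDiff {n : ℕ} (pos : Fin n → Fin n → Bool)
    (c₁ c₂ : Fin n → ℕ) : errU pos c₁ ≤ errU pos c₂ + #(coclusteringDiff c₁ c₂) := by
  unfold errU
  refine (card_le_card fun p hp => ?_).trans (card_union_le _ _)
  simp only [coclusteringDiff, mem_filter, mem_union, mem_univ, true_and] at hp ⊢
  by_cases hd : c₁ p.1 = c₁ p.2 ↔ c₂ p.1 = c₂ p.2
  · exact .inl ⟨hp.1, by tauto⟩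
  · exact .inr hd

theorem exists_coarse_near_optimal_clustering_general {n : ℕ}
    (pos : Fin n → Fin n → Bool)
    (k' : ℕ) (hk' : 1 ≤ k') :
    ∃ c' : Fin n → ℕ,
      (Finset.univ.image c').card ≤ 2 * k' ∧
      ∀ c : Fin n → ℕ, (errU pos c' : ℝ) ≤ (errU pos c : ℝ) + 4 * n ^ 2 / k' := by
  set q := Function.argmin (errU pos)
  obtain ⟨d, hd_card, hd_diff⟩ := exists_coarsening q hk'
  let e := Equiv.natSumNatEquivNat
  refine ⟨e ∘ d, ?_, fun c => ?_⟩
  · rwa [← image_image, card_image_of_injective _ e.injective]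
  have hdiff : coclusteringDiff (e ∘ d) q = coclusteringDiff d q := by
    simp [coclusteringDiff, e.injective.eq_iff]
  have hnat : errU pos (e ∘ d) ≤ errU pos c + 3 * (n / k') * n := by
    rw [Fintype.card_fin, ← hdiff] at hd_diff
    exact (errU_le_errU_add_card_coclusteringDiff pos (e ∘ d) q).trans
      (add_le_add (Function.argmin_le _ c) hd_diff)
  calc (errU pos (e ∘ d) : ℝ) ≤ errU pos c + 3 * ((n / k' : ℕ) : ℝ) * n := by
        exact_mod_cast hnat
    _ ≤ errU pos c + 3 * ((n : ℝ) / k') * n := by gcongr; exact Nat.cast_div_le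
    _ = errU pos c + 3 * n ^ 2 / k' := by ring
    _ ≤ errU pos c + 4 * n ^ 2 / k' := by gcongr; norm_num

/-- For every `n`-vertex unweighted complete labeled graph and every `k' ≥ 1` there
is a clustering with at most `2k'` clusters whose disagreement is at most
`OPT + 4n²/k'`, where `OPT` is the minimum disagreement over all clusterings. -/
theorem exists_coarse_near_optimal_clustering {n : ℕ}
    (pos : Fin n → Fin n → Bool) (hsym : ∀ u v, pos u v = pos v u)
    (k' : ℕ) (hk' : 1 ≤ k') :
    ∃ c' : Fin n → ℕ,
      (Finset.univ.image c').card ≤ 2 * k' ∧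
      ∀ c : Fin n → ℕ, (errU pos c' : ℝ) ≤ (errU pos c : ℝ) + 4 * n ^ 2 / k' :=
  exists_coarse_near_optimal_clustering_general pos k' hk'
end

section
/- Let G and H be weighted labeled graphs on vertex set V, decomposed into positive parts G⁺, H⁺ and negative parts G⁻, H⁻. Then for any clustering C with k clusters, |err(C, G) - err(C, H)| ≤ k · (d_cut(G⁻, H⁻) + d_cut(G⁺, H⁺)) and |agr(C, G) - agr(C, H)| ≤ k · (d_cut(G⁻, H⁻) + d_cut(G⁺, H⁺)), where d_cut(A, B) = max_{S,T ⊆ V} |w_A(S,T) - w_B(S,T)|. -/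
/-!
Both `errW` and `agrW` count one weight inside the clusters and another across them. Splitting
by the cluster `C_i` of the first endpoint, each is a sum over the clusters of `w_a(C_i, C_i)`
and `w_b(C_i, V \ C_i)`, so one cluster moves the total by at most the two cut distances.
-/

open Finset

section ClusterWeight

variable {V ι : Type*} [Fintype V] [DecidableEq ι]

def clusterWeight (a b : V → V → ℝ) (c : V → ι) : ℝ :=
  ∑ u, ∑ v, if c u = c v then a u v else b u v

theorem clusterWeight_eq_sum_cutW [Fintype ι] (a b : V → V → ℝ) (c : V → ι) :
    clusterWeight a b c =
      ∑ i, (cutW a {u | c u = i} {u | c u = i} + cutW b {u | c u = i} {u | c u ≠ i}) := by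
  unfold clusterWeight cutW
  rw [← sum_fiberwise univ c]
  refine sum_congr rfl fun i _ => ?_
  rw [← sum_add_distrib]
  refine sum_congr rfl fun u hu => ?_
  rw [(mem_filter.1 hu).2, sum_ite]
  simp_rw [eq_comm (a := i)]

theorem abs_clusterWeight_sub_le [Fintype ι] {aG aH bG bH : V → V → ℝ} {da db : ℝ}
    (ha : ∀ S T : Finset V, |cutW aG S T - cutW aH S T| ≤ da)
    (hb : ∀ S T : Finset V, |cutW bG S T - cutW bH S T| ≤ db) (c : V → ι) :
    |clusterWeight aG bG c - clusterWeight aH bH c| ≤ Fintype.card ι * (da + db) := by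
  rw [clusterWeight_eq_sum_cutW, clusterWeight_eq_sum_cutW, ← sum_sub_distrib]
  calc |∑ i, _| ≤ ∑ _i : ι, (da + db) := by
        refine (abs_sum_le_sum_abs _ _).trans (sum_le_sum fun i _ => ?_)
        rw [add_sub_add_comm]
        exact (abs_add_le _ _).trans (add_le_add (ha _ _) (hb _ _))
    _ = Fintype.card ι * (da + db) := by simp [mul_add]

end ClusterWeight

/-- If the positive parts of `G` and `H` are at cut distance at most `dpos` and the
negative parts at cut distance at most `dneg` (i.e. `|w_G(S,T) - w_H(S,T)| ≤ d` for
all vertex sets `S, T`), then for any clustering with `k` clusters, both the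
disagreements and the agreements on `G` and `H` differ by at most
`k · (dneg + dpos)`. -/
theorem err_agr_cut_distance_transfer {V : Type*} [Fintype V] (k : ℕ)
    (wGp wGn wHp wHn : V → V → ℝ) (dpos dneg : ℝ)
    (hp : ∀ S T : Finset V, |cutW wGp S T - cutW wHp S T| ≤ dpos)
    (hn : ∀ S T : Finset V, |cutW wGn S T - cutW wHn S T| ≤ dneg)
    (c : V → Fin k) :
    |errW wGp wGn c - errW wHp wHn c| ≤ k * (dneg + dpos) ∧
      |agrW wGp wGn c - agrW wHp wHn c| ≤ k * (dneg + dpos) := by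
  have herr : |errW wGp wGn c - errW wHp wHn c| ≤ Fintype.card (Fin k) * (dneg + dpos) :=
    abs_clusterWeight_sub_le hn hp c
  have hagr : |agrW wGp wGn c - agrW wHp wHn c| ≤ Fintype.card (Fin k) * (dpos + dneg) :=
    abs_clusterWeight_sub_le hp hn c
  rw [Fintype.card_fin] at herr hagr
  exact ⟨herr, add_comm dpos dneg ▸ hagr⟩
end

section
/- Let H' be obtained from a weighted labeled graph H by splitting each vertex v into v⁺ and v⁻, attaching positive edges of v to v⁺ and negative edges to v⁻, and adding a positive edge v⁺v⁻ of infinite (or sufficiently large finite) weight. Then there is a bijection between clusterings of H and clusterings of H' of finite disagreement (those placing v⁺ and v⁻ together for all v) preserving the disagreement value; in particular the optimal MinDis values of H and H' coincide. -/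
/-- Disagreement (over ordered pairs) of the clustering `c` with the labeled
weighted graph given by positive weights `wpos` and negative weights `wneg`. -/
def errOrd {V : Type*} [Fintype V] (wpos wneg : V → V → ℝ) (c : V → ℕ) : ℝ :=
  ∑ u, ∑ v, if c u = c v then wneg u v else wpos u v

/-- Positive weights of the split graph `H'`: each vertex `v` of `H` is split into
`v⁺ = inl v` and `v⁻ = inr v`; positive edges of `H` are attached to the `⁺`-copies
and `v⁺` is joined to `v⁻` by a positive edge of large weight `W`. -/
noncomputable def splitPos {V : Type*} [DecidableEq V]
    (wpos : V → V → ℝ) (W : ℝ) : V ⊕ V → V ⊕ V → ℝ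
  | .inl u, .inl v => wpos u v
  | .inl u, .inr v => if u = v then W else 0
  | .inr u, .inl v => if u = v then W else 0
  | .inr _, .inr _ => 0

/-- Negative weights of the split graph `H'`: negative edges of `H` are attached to
the `⁻`-copies. -/
def splitNeg {V : Type*} (wneg : V → V → ℝ) : V ⊕ V → V ⊕ V → ℝ
  | .inr u, .inr v => wneg u v
  | _, _ => 0

/-! Once every `v⁺` shares a cluster with `v⁻`, the edges between `⁺`- and `⁻`-copies (in
particular the heavy edges `v⁺v⁻`) all agree, and each remaining edge of `H'` agrees exactly
when the corresponding edge of `H` does. Separating some `v⁺` from `v⁻` costs at least `W`,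
while putting all of `H` into one cluster costs `∑ wneg`; so for `W > ∑ wneg` separating
clusterings never improve on the optimum of `H`. -/

section Split

variable {V : Type*}

theorem splitNeg_nonneg {wneg : V → V → ℝ} (hneg : ∀ u v, 0 ≤ wneg u v) :
    ∀ a b, 0 ≤ splitNeg wneg a b := by
  rintro (u | u) (v | v) <;> simp [splitNeg, hneg]

variable [DecidableEq V]

theorem splitPos_nonneg {wpos : V → V → ℝ} (hpos : ∀ u v, 0 ≤ wpos u v) {W : ℝ}
    (hW : 0 ≤ W) : ∀ a b, 0 ≤ splitPos wpos W a b := by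
  rintro (u | u) (v | v) <;> simp only [splitPos] <;> try split_ifs
  all_goals simp [*]

end Split

section ErrOrd

variable {V : Type*} [Fintype V]

theorem errOrd_const (wpos wneg : V → V → ℝ) (k : ℕ) :
    errOrd wpos wneg (fun _ => k) = ∑ u, ∑ v, wneg u v := by
  simp [errOrd]

theorem le_errOrd {wpos wneg : V → V → ℝ} (hpos : ∀ u v, 0 ≤ wpos u v)
    (hneg : ∀ u v, 0 ≤ wneg u v) (c : V → ℕ) (u v : V) :
    (if c u = c v then wneg u v else wpos u v) ≤ errOrd wpos wneg c := by
  have hterm : ∀ u v, 0 ≤ if c u = c v then wneg u v else wpos u v := fun u v => by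
    split_ifs
    exacts [hneg u v, hpos u v]
  calc (if c u = c v then wneg u v else wpos u v)
      ≤ ∑ v', if c u = c v' then wneg u v' else wpos u v' :=
        Finset.single_le_sum (fun v' _ => hterm u v') (Finset.mem_univ v)
    _ ≤ errOrd wpos wneg c :=
        Finset.single_le_sum (f := fun u => ∑ v', if c u = c v' then wneg u v' else wpos u v')
          (fun u' _ => Finset.sum_nonneg fun v' _ => hterm u' v') (Finset.mem_univ u)

variable [DecidableEq V]

theorem errOrd_split_of_forall_eq (wpos wneg : V → V → ℝ) (W : ℝ) (c' : V ⊕ V → ℕ)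
    (h : ∀ v, c' (Sum.inl v) = c' (Sum.inr v)) :
    errOrd (splitPos wpos W) (splitNeg wneg) c' =
      errOrd wpos wneg (fun v => c' (Sum.inl v)) := by
  have hcross : ∀ u v, (if c' (Sum.inr u) = c' (Sum.inr v) then (0 : ℝ)
      else if u = v then W else 0) = 0 := by
    intro u v
    split_ifs with hc huv
    exacts [rfl, absurd (huv ▸ rfl) hc, rfl]
  simp only [errOrd, Fintype.sum_sum_type, splitPos, splitNeg, h, hcross]
  simp only [Finset.sum_const_zero, add_zero, zero_add, ← Finset.sum_add_distrib]
  refine Finset.sum_congr rfl fun u _ => Finset.sum_congr rfl fun v _ => ?_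
  split_ifs <;> simp

theorem errOrd_split_elim (wpos wneg : V → V → ℝ) (W : ℝ) (c : V → ℕ) :
    errOrd (splitPos wpos W) (splitNeg wneg) (Sum.elim c c) = errOrd wpos wneg c :=
  errOrd_split_of_forall_eq wpos wneg W (Sum.elim c c) fun _ => rfl

theorem le_errOrd_split_of_ne {wpos wneg : V → V → ℝ} (hpos : ∀ u v, 0 ≤ wpos u v)
    (hneg : ∀ u v, 0 ≤ wneg u v) {W : ℝ} (hW : 0 ≤ W) (c' : V ⊕ V → ℕ)
    (h : ∃ v, c' (Sum.inl v) ≠ c' (Sum.inr v)) :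
    W ≤ errOrd (splitPos wpos W) (splitNeg wneg) c' := by
  obtain ⟨v, hv⟩ := h
  calc W = if c' (Sum.inl v) = c' (Sum.inr v) then splitNeg wneg (Sum.inl v) (Sum.inr v)
        else splitPos wpos W (Sum.inl v) (Sum.inr v) := by simp [hv, splitPos]
    _ ≤ _ := le_errOrd (splitPos_nonneg hpos hW) (splitNeg_nonneg hneg) c' _ _

theorem sInf_errOrd_split {wpos wneg : V → V → ℝ} (hpos : ∀ u v, 0 ≤ wpos u v)
    (hneg : ∀ u v, 0 ≤ wneg u v) {W : ℝ} (hWbig : ∑ u, ∑ v, wneg u v < W) :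
    sInf {x : ℝ | ∃ c' : V ⊕ V → ℕ, errOrd (splitPos wpos W) (splitNeg wneg) c' = x} =
      sInf {x : ℝ | ∃ c : V → ℕ, errOrd wpos wneg c = x} := by
  have hW : 0 ≤ W :=
    (Finset.sum_nonneg fun u _ => Finset.sum_nonneg fun v _ => hneg u v).trans hWbig.le
  refine csInf_eq_csInf_of_forall_exists_le ?_ ?_
  · rintro _ ⟨c', rfl⟩
    by_cases h : ∀ v, c' (Sum.inl v) = c' (Sum.inr v)
    · exact ⟨_, ⟨fun v => c' (Sum.inl v), rfl⟩, (errOrd_split_of_forall_eq _ _ _ c' h).ge⟩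
    · push Not at h
      refine ⟨_, ⟨fun _ => 0, rfl⟩, ?_⟩
      rw [errOrd_const]
      exact hWbig.le.trans (le_errOrd_split_of_ne hpos hneg hW c' h)
  · rintro _ ⟨c, rfl⟩
    exact ⟨_, ⟨Sum.elim c c, rfl⟩, (errOrd_split_elim _ _ _ c).le⟩

end ErrOrd

theorem vertex_splitting_general {V : Type*} [Fintype V] [DecidableEq V]
    (wpos wneg : V → V → ℝ)
    (hpos : ∀ u v, 0 ≤ wpos u v) (hneg : ∀ u v, 0 ≤ wneg u v)
    (W : ℝ) (hW : 0 ≤ W) :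
    (∀ c : V → ℕ,
      errOrd (splitPos wpos W) (splitNeg wneg) (Sum.elim c c) = errOrd wpos wneg c) ∧
    (∀ c' : V ⊕ V → ℕ, (∀ v, c' (Sum.inl v) = c' (Sum.inr v)) →
      errOrd (splitPos wpos W) (splitNeg wneg) c' =
        errOrd wpos wneg (fun v => c' (Sum.inl v))) ∧
    (∀ c' : V ⊕ V → ℕ, (∃ v, c' (Sum.inl v) ≠ c' (Sum.inr v)) →
      W ≤ errOrd (splitPos wpos W) (splitNeg wneg) c') ∧
    ((∑ u, ∑ v, wneg u v) < W →
      sInf {x : ℝ | ∃ c' : V ⊕ V → ℕ, errOrd (splitPos wpos W) (splitNeg wneg) c' = x} =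
        sInf {x : ℝ | ∃ c : V → ℕ, errOrd wpos wneg c = x}) :=
  ⟨errOrd_split_elim wpos wneg W, errOrd_split_of_forall_eq wpos wneg W,
    le_errOrd_split_of_ne hpos hneg hW, sInf_errOrd_split hpos hneg⟩

/-- Vertex splitting preserves correlation clustering: clusterings of `H` correspond
to clusterings of `H'` placing `v⁺` and `v⁻` together (for all `v`) with the same
disagreement; any clustering of `H'` separating some `v⁺` from `v⁻` has
disagreement at least `W`; and if `W` exceeds the total negative weight, the optimal
MinDis values of `H` and `H'` coincide. -/
theorem vertex_splitting {V : Type*} [Fintype V] [DecidableEq V]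
    (wpos wneg : V → V → ℝ)
    (hpos : ∀ u v, 0 ≤ wpos u v) (hneg : ∀ u v, 0 ≤ wneg u v)
    (hps : ∀ u v, wpos u v = wpos v u) (hns : ∀ u v, wneg u v = wneg v u)
    (W : ℝ) (hW : 0 ≤ W) :
    (∀ c : V → ℕ,
      errOrd (splitPos wpos W) (splitNeg wneg) (Sum.elim c c) = errOrd wpos wneg c) ∧
    (∀ c' : V ⊕ V → ℕ, (∀ v, c' (Sum.inl v) = c' (Sum.inr v)) →
      errOrd (splitPos wpos W) (splitNeg wneg) c' =
        errOrd wpos wneg (fun v => c' (Sum.inl v))) ∧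
    (∀ c' : V ⊕ V → ℕ, (∃ v, c' (Sum.inl v) ≠ c' (Sum.inr v)) →
      W ≤ errOrd (splitPos wpos W) (splitNeg wneg) c') ∧
    ((∑ u, ∑ v, wneg u v) < W →
      sInf {x : ℝ | ∃ c' : V ⊕ V → ℕ, errOrd (splitPos wpos W) (splitNeg wneg) c' = x} =
        sInf {x : ℝ | ∃ c : V → ℕ, errOrd wpos wneg c = x}) :=
  vertex_splitting_general wpos wneg hpos hneg W hW
end
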